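/- For every n ∈ ℕ, the function ρ ↦ c_n(ρ) is differentiable on (0,∞) and its derivative satisfies c_n'(ρ) = (1/(4π·n!·√ρ)) · ∫_{−∞}^{∞} z^{2n}/cosh((z + ln ρ)/2) dz = (1/(2π·n!·√ρ)) · Σ_{k=0}^{n} C(2n,2k)·2^{2k}·(ln ρ)^{2(n−k)} · ∫_{−∞}^{∞} u^{2k}/cosh(u) du = (1/(2·n!)) · Σ_{k=0}^{n} C(2n,2k)·π^{2k}·|E_{2k}|·(ln ρ)^{2(n−k)}·ρ^{−1/2}. -/

import Mathlib

/-!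
Differentiating under the integral sign,
`∂ρ (log (1 + ρ e^z) e^{-z/2}) = 1 / (e^{-z/2} + ρ e^{z/2}) = 1 / (2 √ρ cosh ((z + log ρ) / 2))`.
For `ρ > ρ₀ / 2` the denominator dominates `min 1 (ρ₀ / 2) · 2 cosh (z / 2)`, so everything is
controlled by the exponentially decaying `z ^ j / cosh (z / 2)`. The substitution
`u = (z + log ρ) / 2` and the binomial theorem expand the resulting integral in the moments
`∫ u ^ j / cosh u`, whose odd terms vanish by symmetry.
-/

open MeasureTheory Real Filter Topology Set Asymptotics Finset

noncomputable def cCoef (n : ℕ) (ρ : ℝ) : ℝ :=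
  (1 / (2 * Real.pi * n.factorial)) *
    ∫ z : ℝ, Real.log (1 + ρ * Real.exp z) * z ^ (2 * n) * Real.exp (-z / 2)

noncomputable def absEuler (j : ℕ) : ℝ :=
  (∫ u : ℝ, u ^ (2 * j) / Real.cosh u) / (2 * (Real.pi / 2) ^ (2 * j + 1))

theorem sum_range_two_mul_add_one_of_odd_eq_zero {M : Type*} [AddCommMonoid M] (n : ℕ)
    {t : ℕ → M} (ht : ∀ j, Odd j → t j = 0) :
    ∑ j ∈ range (2 * n + 1), t j = ∑ k ∈ range (n + 1), t (2 * k) := by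
  induction n with
  | zero => simp
  | succ n ih =>
    rw [show 2 * (n + 1) + 1 = 2 * n + 1 + 1 + 1 by ring, sum_range_succ, sum_range_succ, ih,
      ht _ (odd_two_mul_add_one n), add_zero, sum_range_succ (n := n + 1)]
    rfl

theorem Function.Odd.integral_eq_zero {E : Type*} [NormedAddCommGroup E] [NormedSpace ℝ E]
    {f : ℝ → E} (hf : f.Odd) : ∫ x, f x = 0 := by
  have h := integral_neg_eq_self f volume
  simp_rw [hf _, integral_neg] at h
  have h2 : (2 : ℝ) • ∫ x, f x = 0 := by
    rw [two_smul]; nth_rw 1 [← h]; exact neg_add_cancel _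
  exact (smul_eq_zero.1 h2).resolve_left two_ne_zero

theorem integral_comp_add_div {E : Type*} [NormedAddCommGroup E] [NormedSpace ℝ E]
    (f : ℝ → E) (d c : ℝ) : ∫ x, f ((x + d) / c) = |c| • ∫ x, f x :=
  (integral_add_right_eq_self (fun x => f (x / c)) d).trans (Measure.integral_comp_div f c)

theorem cosh_le_exp_abs (x : ℝ) : cosh x ≤ exp |x| := by
  rw [← cosh_abs, cosh_eq]
  have : exp (-|x|) ≤ exp |x| := exp_le_exp.2 (by linarith [abs_nonneg x])
  linarith

theorem isBigO_inv_cosh_exp_neg : (fun x => (cosh x)⁻¹) =O[atTop] fun x => exp (-x) := by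
  refine IsBigO.of_bound 2 (Eventually.of_forall fun x => ?_)
  rw [norm_inv, norm_of_nonneg (cosh_pos x).le, norm_of_nonneg (exp_pos _).le, exp_neg,
    inv_le_comm₀ (cosh_pos x) (by positivity), mul_inv, inv_inv, cosh_eq]
  linarith [exp_pos (-x)]

theorem integrable_pow_div_cosh (j : ℕ) : Integrable fun u : ℝ => u ^ j / cosh u := by
  have hcont : Continuous fun u : ℝ => u ^ j / cosh u :=
    (continuous_pow j).div continuous_cosh fun u => (cosh_pos u).ne'
  have ho : (fun u : ℝ => u ^ j / cosh u) =O[atTop] fun u => exp (-(1 / 2) * u) := by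
    refine ((isLittleO_pow_exp_pos_mul_atTop j one_half_pos).isBigO.mul
      isBigO_inv_cosh_exp_neg).congr (fun u => div_eq_mul_inv _ _) fun u => ?_
    rw [← exp_add]; ring_nf
  refine hcont.locallyIntegrable.integrable_of_isBigO_atTop_of_norm_isNegInvariant
    (Eventually.of_forall fun u => ?_) ho
    ⟨Ioi 0, Ioi_mem_atTop 0, exp_neg_integrableOn_Ioi 0 one_half_pos⟩
  simp

theorem integrable_pow_div_cosh_div (j : ℕ) {c : ℝ} (hc : c ≠ 0) :
    Integrable fun u : ℝ => u ^ j / cosh (u / c) := by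
  refine (((integrable_pow_div_cosh j).comp_div hc).const_mul (c ^ j)).congr
    (Eventually.of_forall fun u => ?_)
  simp only [div_pow]
  field_simp

theorem log_one_add_mul_exp_le {ρ : ℝ} (hρ : 0 ≤ ρ) (z : ℝ) : log (1 + ρ * exp z) ≤ ρ + |z| := by
  have hle : 1 + ρ * exp z ≤ (1 + ρ) * exp |z| := by
    have h1 : 1 ≤ exp |z| := one_le_exp (abs_nonneg z)
    have h2 : exp z ≤ exp |z| := exp_le_exp.2 (le_abs_self z)
    nlinarith
  calc log (1 + ρ * exp z) ≤ log ((1 + ρ) * exp |z|) := log_le_log (by positivity) hle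
    _ = log (1 + ρ) + |z| := by rw [log_mul (by positivity) (exp_pos _).ne', log_exp]
    _ ≤ ρ + |z| := by linarith [log_le_sub_one_of_pos (by linarith : 0 < 1 + ρ)]

theorem log_one_add_mul_exp_mul_exp_neg_half_le {ρ : ℝ} (hρ : 0 ≤ ρ) (z : ℝ) :
    log (1 + ρ * exp z) * exp (-z / 2) ≤ (ρ + |z|) / cosh (z / 2) := by
  have hdecay : log (1 + ρ * exp z) * exp (-z / 2) ≤ (ρ + |z|) * exp (-|z / 2|) := by
    rcases le_total 0 z with hz | hz
    · rw [abs_of_nonneg (by linarith : 0 ≤ z / 2), neg_div]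
      exact mul_le_mul_of_nonneg_right (log_one_add_mul_exp_le hρ z) (exp_pos _).le
    · have hlog : log (1 + ρ * exp z) ≤ ρ * exp z := by
        linarith [log_le_sub_one_of_pos (by positivity : 0 < 1 + ρ * exp z)]
      have hexp : exp z * exp (-z / 2) = exp (-|z / 2|) := by
        rw [abs_of_nonpos (by linarith : z / 2 ≤ 0), ← exp_add]; ring_nf
      calc log (1 + ρ * exp z) * exp (-z / 2) ≤ ρ * exp z * exp (-z / 2) :=
            mul_le_mul_of_nonneg_right hlog (exp_pos _).le
        _ ≤ (ρ + |z|) * exp (-|z / 2|) := by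
            rw [mul_assoc, hexp]
            exact mul_le_mul_of_nonneg_right (by linarith [abs_nonneg z]) (exp_pos _).le
  have hcosh : cosh (z / 2) * exp (-|z / 2|) ≤ 1 := by
    calc cosh (z / 2) * exp (-|z / 2|) ≤ exp |z / 2| * exp (-|z / 2|) :=
          mul_le_mul_of_nonneg_right (cosh_le_exp_abs _) (exp_pos _).le
      _ = 1 := by rw [← exp_add, add_neg_cancel, exp_zero]
  refine hdecay.trans ?_
  rw [le_div_iff₀ (cosh_pos _)]
  nlinarith [abs_nonneg z, exp_pos (-|z / 2|)]

theorem integrable_log_one_add_mul_exp_mul_pow {ρ : ℝ} (hρ : 0 ≤ ρ) (m : ℕ) :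
    Integrable fun z : ℝ => log (1 + ρ * exp z) * z ^ m * exp (-z / 2) := by
  have hdom : Integrable fun z : ℝ =>
      ρ * ‖z ^ m / cosh (z / 2)‖ + ‖z ^ (m + 1) / cosh (z / 2)‖ :=
    ((integrable_pow_div_cosh_div m two_ne_zero).norm.const_mul ρ).add
      (integrable_pow_div_cosh_div (m + 1) two_ne_zero).norm
  refine hdom.mono' (by fun_prop) (Eventually.of_forall fun z => ?_)
  have hlog : 0 ≤ log (1 + ρ * exp z) := log_nonneg (by nlinarith [exp_pos z])
  have hc := cosh_pos (z / 2)
  calc ‖log (1 + ρ * exp z) * z ^ m * exp (-z / 2)‖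
      = log (1 + ρ * exp z) * exp (-z / 2) * |z| ^ m := by
        rw [norm_mul, norm_mul, norm_of_nonneg hlog, norm_of_nonneg (exp_pos _).le, norm_pow,
          norm_eq_abs]; ring
    _ ≤ (ρ + |z|) / cosh (z / 2) * |z| ^ m :=
        mul_le_mul_of_nonneg_right (log_one_add_mul_exp_mul_exp_neg_half_le hρ z) (by positivity)
    _ = ρ * ‖z ^ m / cosh (z / 2)‖ + ‖z ^ (m + 1) / cosh (z / 2)‖ := by
        simp only [norm_div, norm_pow, norm_eq_abs, abs_of_pos hc]; ring

theorem exp_neg_half_add_mul_exp_half {x : ℝ} (hx : 0 < x) (z : ℝ) :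
    exp (-z / 2) + x * exp (z / 2) = 2 * √x * cosh ((z + log x) / 2) := by
  have hsqrt : √x = exp (log x / 2) := by
    rw [sqrt_eq_rpow, rpow_def_of_pos hx]; ring_nf
  have hx' : x = exp (log x / 2) ^ 2 := by rw [← exp_nat_mul]; ring_nf; exact (exp_log hx).symm
  rw [cosh_eq, hsqrt, show (z + log x) / 2 = z / 2 + log x / 2 by ring, exp_neg, exp_add,
    neg_div, exp_neg]
  conv_lhs => rw [hx']
  field_simp
  ring

theorem min_mul_two_cosh_le {a x : ℝ} (hax : a ≤ x) (z : ℝ) :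
    min 1 a * (2 * cosh (z / 2)) ≤ exp (-z / 2) + x * exp (z / 2) := by
  rw [cosh_eq, neg_div]
  have h1 := min_le_left 1 a
  have h2 := min_le_right 1 a
  nlinarith [exp_pos (z / 2), exp_pos (-(z / 2))]

theorem hasDerivAt_log_one_add_mul_exp_mul (z c : ℝ) {x : ℝ} (hx : 0 ≤ x) :
    HasDerivAt (fun x => log (1 + x * exp z) * c * exp (-z / 2))
      (c / (exp (-z / 2) + x * exp (z / 2))) x := by
  have hpos : 0 < 1 + x * exp z := by positivity
  have hlin : HasDerivAt (fun x => 1 + x * exp z) (exp z) x := by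
    simpa using ((hasDerivAt_id x).mul_const (exp z)).const_add 1
  refine (((hlin.log hpos.ne').mul_const c).mul_const _).congr_deriv ?_
  have hexp : exp z = exp (z / 2) ^ 2 := by rw [← exp_nat_mul]; ring_nf
  rw [hexp, neg_div, exp_neg]
  field_simp

theorem hasDerivAt_integral_log_one_add_mul_exp_mul_pow (m : ℕ) {ρ : ℝ} (hρ : 0 < ρ) :
    HasDerivAt (fun x => ∫ z : ℝ, log (1 + x * exp z) * z ^ m * exp (-z / 2))
      (∫ z : ℝ, z ^ m / (exp (-z / 2) + ρ * exp (z / 2))) ρ := by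
  set a := min 1 (ρ / 2)
  have hbound : ∀ z, ∀ x ∈ Ioi (ρ / 2),
      ‖z ^ m / (exp (-z / 2) + x * exp (z / 2))‖ ≤ (2 * a)⁻¹ * ‖z ^ m / cosh (z / 2)‖ := by
    intro z x hx
    have hc := cosh_pos (z / 2)
    have hpos : 0 < a * (2 * cosh (z / 2)) := by positivity
    have hden := min_mul_two_cosh_le (le_of_lt hx : ρ / 2 ≤ x) z
    calc ‖z ^ m / (exp (-z / 2) + x * exp (z / 2))‖
        = ‖z ^ m‖ / (exp (-z / 2) + x * exp (z / 2)) := by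
          rw [norm_div, norm_of_nonneg (hpos.le.trans hden)]
      _ ≤ ‖z ^ m‖ / (a * (2 * cosh (z / 2))) :=
          div_le_div_of_nonneg_left (norm_nonneg _) hpos hden
      _ = (2 * a)⁻¹ * ‖z ^ m / cosh (z / 2)‖ := by
          rw [norm_div, norm_of_nonneg hc.le]; field_simp
  refine (hasDerivAt_integral_of_dominated_loc_of_deriv_le (Ioi_mem_nhds (half_lt_self hρ))
    (Eventually.of_forall fun x => by fun_prop) (integrable_log_one_add_mul_exp_mul_pow hρ.le m)
    (Measurable.aestronglyMeasurable (by fun_prop)) (Eventually.of_forall hbound)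
    ((integrable_pow_div_cosh_div m two_ne_zero).norm.const_mul _)
    (Eventually.of_forall fun z x hx => ?_)).2
  exact hasDerivAt_log_one_add_mul_exp_mul z _ (by linarith [mem_Ioi.1 hx])

theorem integral_pow_div_cosh_half_add (m : ℕ) (L : ℝ) :
    ∫ z : ℝ, z ^ m / cosh ((z + L) / 2)
      = 2 * ∑ j ∈ range (m + 1),
          (m.choose j : ℝ) * 2 ^ j * (-L) ^ (m - j) * ∫ u : ℝ, u ^ j / cosh u := by
  have hsub : ∫ z : ℝ, z ^ m / cosh ((z + L) / 2) = 2 * ∫ u : ℝ, (2 * u - L) ^ m / cosh u := by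
    have h := integral_comp_add_div (fun u => (2 * u - L) ^ m / cosh u) L 2
    rw [abs_two, smul_eq_mul] at h
    rw [← h]
    congr with z
    ring_nf
  have hbinom : ∀ u : ℝ, (2 * u - L) ^ m / cosh u
      = ∑ j ∈ range (m + 1), (m.choose j : ℝ) * 2 ^ j * (-L) ^ (m - j) * (u ^ j / cosh u) := by
    intro u
    rw [sub_eq_add_neg, add_pow, sum_div]
    exact sum_congr rfl fun j _ => by ring
  simp_rw [hsub, hbinom]
  rw [integral_finsetSum _ fun j _ => (integrable_pow_div_cosh j).const_mul _]
  simp_rw [integral_const_mul]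

theorem integral_pow_two_mul_div_cosh_half_add (n : ℕ) (L : ℝ) :
    ∫ z : ℝ, z ^ (2 * n) / cosh ((z + L) / 2)
      = 2 * ∑ k ∈ range (n + 1),
          ((2 * n).choose (2 * k) : ℝ) * 2 ^ (2 * k) * L ^ (2 * (n - k))
            * ∫ u : ℝ, u ^ (2 * k) / cosh u := by
  have hodd : ∀ j, Odd j → ∫ u : ℝ, u ^ j / cosh u = 0 := fun j hj =>
    Function.Odd.integral_eq_zero fun u => by rw [cosh_neg, hj.neg_pow, neg_div]
  rw [integral_pow_div_cosh_half_add, sum_range_two_mul_add_one_of_odd_eq_zero n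
    fun j hj => by rw [hodd j hj, mul_zero]]
  congr 1
  refine sum_congr rfl fun k _ => ?_
  rw [← mul_tsub, (even_two_mul _).neg_pow]

theorem integral_pow_two_mul_div_cosh (k : ℕ) :
    ∫ u : ℝ, u ^ (2 * k) / cosh u = 2 * (π / 2) ^ (2 * k + 1) * absEuler k := by
  rw [absEuler, mul_div_cancel₀ _ (by positivity)]

/-- `ρ ↦ c_n(ρ)` is differentiable on `(0,∞)`, with derivative
`c_n'(ρ) = (1/(4π·n!·√ρ)) ∫ z^{2n}/cosh((z+ln ρ)/2) dz
        = (1/(2π·n!·√ρ)) Σ_k C(2n,2k)·2^{2k}·(ln ρ)^{2(n−k)}·∫ u^{2k}/cosh u du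
        = (1/(2·n!)) Σ_k C(2n,2k)·π^{2k}·|E_{2k}|·(ln ρ)^{2(n−k)}·ρ^{−1/2}`. -/
theorem stmt5 (n : ℕ) (ρ : ℝ) (hρ : 0 < ρ) :
    HasDerivAt (cCoef n)
      ((1 / (4 * Real.pi * n.factorial * Real.sqrt ρ)) *
        ∫ z : ℝ, z ^ (2 * n) / Real.cosh ((z + Real.log ρ) / 2)) ρ
    ∧ (1 / (4 * Real.pi * n.factorial * Real.sqrt ρ)) *
        (∫ z : ℝ, z ^ (2 * n) / Real.cosh ((z + Real.log ρ) / 2))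
      = (1 / (2 * Real.pi * n.factorial * Real.sqrt ρ)) *
          ∑ k ∈ Finset.range (n + 1),
            (Nat.choose (2 * n) (2 * k) : ℝ) * 2 ^ (2 * k) * (Real.log ρ) ^ (2 * (n - k))
              * ∫ u : ℝ, u ^ (2 * k) / Real.cosh u
    ∧ (1 / (2 * Real.pi * n.factorial * Real.sqrt ρ)) *
          (∑ k ∈ Finset.range (n + 1),
            (Nat.choose (2 * n) (2 * k) : ℝ) * 2 ^ (2 * k) * (Real.log ρ) ^ (2 * (n - k))
              * ∫ u : ℝ, u ^ (2 * k) / Real.cosh u)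
      = (1 / (2 * n.factorial)) *
          ∑ k ∈ Finset.range (n + 1),
            (Nat.choose (2 * n) (2 * k) : ℝ) * Real.pi ^ (2 * k) * absEuler k
              * (Real.log ρ) ^ (2 * (n - k)) / Real.sqrt ρ := by
  have hkernel : ∫ z : ℝ, z ^ (2 * n) / (exp (-z / 2) + ρ * exp (z / 2))
      = (∫ z : ℝ, z ^ (2 * n) / cosh ((z + log ρ) / 2)) / (2 * √ρ) := by
    rw [← integral_div]
    congr with z
    rw [exp_neg_half_add_mul_exp_half hρ]
    ring
  refine ⟨?_, ?_, ?_⟩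
  · refine ((hasDerivAt_integral_log_one_add_mul_exp_mul_pow (2 * n) hρ).const_mul
      (1 / (2 * π * n.factorial))).congr_deriv ?_
    rw [hkernel]
    field_simp
    ring
  · rw [integral_pow_two_mul_div_cosh_half_add]
    field_simp
    ring
  · rw [mul_sum, mul_sum]
    refine sum_congr rfl fun k _ => ?_
    rw [integral_pow_two_mul_div_cosh, div_pow, pow_succ]
    field_simp
    ring
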